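/- (Straightening consequence) Let u, v be words on an alphabet L, 1 ≤ i ≠ j ≤ m, and p, q nonnegative integers. In Skew[L|m]: Σ_{(v)} (u v₍₁₎|i^{(p)})(v₍₂₎|j^{(q)}) = (-1)^{|u||v|} Σ_{(u), r} (-1)^{|u₍₂₎|} (v u₍₁₎|i^{(p)} j^{(r)})(u₍₂₎|j^{(q-r)}), where r ranges over 0 ≤ r ≤ q and the slices range over all coproduct slices of v (resp. u) of the appropriate lengths. -/

import Mathlib

/-!
Both sides are expanded into monomials of the word `v u` in which the letters at the positions of
some `S ⊆ v` and `A ⊆ u` carry the place `j` and all other letters carry `i`. Merging two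
increasing products of anticommuting generators costs `(-1)` to the number of inversions between
their index sets, which is exactly the shuffle sign; hence a term `(w₍₁₎|…)(w₍₂₎|…)` of a slice sum
is `shuffleSign` times a monomial of the whole word `w`. On the left, moving `u` past `v` costs
`(-1)^{|u||v|}`, and what remains are the monomials with `A = ∅` and `|S| = q`. On the right, after
summing out `r` and splitting each slice of `v u₍₁₎` into its parts on `v` and on `u₍₁₎`, the term
indexed by `T = u₍₂₎` becomes `(-1)^{|T|}` times the monomial of some `(S, A)` with `T ⊆ A`; the
alternating sum of `(-1)^{|T|}` over `T ⊆ A` vanishes unless `A = ∅`.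
-/

/-- The letterplace algebra `Skew[L|m]`. -/
abbrev LetterplaceAlgebra (L : Type*) (m : ℕ) : Type _ :=
  ExteriorAlgebra ℤ ((L × Fin m) →₀ ℤ)

/-- The letterplace variable `(x|i)`. -/
noncomputable def lpVar {L : Type*} {m : ℕ} (x : L) (i : Fin m) : LetterplaceAlgebra L m :=
  ExteriorAlgebra.ι ℤ (Finsupp.single (x, i) 1)

/-- The shuffle sign of the coproduct slice `(Sᶜ, S)` of a word of length `a`. -/
def shuffleSign {a : ℕ} (S : Finset (Fin a)) : ℤ :=
  (-1) ^ (∑ i ∈ S, (Sᶜ.filter fun j => i < j).card)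

/-- The biproduct `(w | 1^{(q 1)} ⋯ m^{(q m)})` (Laplace expansion); zero if the length of
`w` differs from `q 1 + ⋯ + q m`. -/
noncomputable def biproduct {L : Type*} {m : ℕ} [DecidableEq L] {ℓ : ℕ}
    (w : Fin ℓ → L) (q : Fin m → ℕ) : LetterplaceAlgebra L m :=
  ∑ f ∈ Finset.univ.filter
      (fun f : Fin ℓ → Fin m => ∀ p, (Finset.univ.filter fun t => f t = p).card = q p),
    (List.ofFn fun t => lpVar (w t) (f t)).prod

/-- The subword of `w` on the positions in `S`, in increasing order. -/
def subword {L : Type*} {c : ℕ} (w : Fin c → L) (S : Finset (Fin c)) : Fin S.card → L :=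
  fun t => w (S.orderIsoOfFin rfl t)

open ExteriorAlgebra Finset

namespace ExteriorAlgebra

variable {R M : Type*} [CommRing R] [AddCommGroup M] [Module R M]

theorem ι_mul_prod_map_ι (x : M) (l : List M) :
    ι R x * (l.map (ι R)).prod = (-1 : ℤ) ^ l.length • ((l.map (ι R)).prod * ι R x) := by
  induction l with
  | nil => simp
  | cons y l ih =>
    have hxy : ι R x * ι R y = -(ι R y * ι R x) := eq_neg_of_add_eq_zero_left (ι_add_mul_swap x y)
    simp only [List.map_cons, List.prod_cons, List.length_cons, pow_succ]
    rw [← mul_assoc, hxy, neg_mul, mul_assoc, ih, mul_smul_comm, ← mul_assoc]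
    module

theorem prod_map_ι_mul_prod_map_ι_comm (l₁ l₂ : List M) :
    (l₁.map (ι R)).prod * (l₂.map (ι R)).prod
      = (-1 : ℤ) ^ (l₁.length * l₂.length) • ((l₂.map (ι R)).prod * (l₁.map (ι R)).prod) := by
  induction l₁ with
  | nil => simp
  | cons x l₁ ih =>
    simp only [List.map_cons, List.prod_cons, List.length_cons]
    rw [mul_assoc, ih, mul_smul_comm, ← mul_assoc, ι_mul_prod_map_ι, smul_mul_assoc, mul_assoc,
      smul_smul, ← pow_add, add_one_mul, add_comm]

theorem ιMulti_mul_ιMulti_comm {a b : ℕ} (x : Fin a → M) (y : Fin b → M) :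
    ιMulti R a x * ιMulti R b y = (-1 : ℤ) ^ (a * b) • (ιMulti R b y * ιMulti R a x) := by
  have h := prod_map_ι_mul_prod_map_ι_comm (R := R) (List.ofFn x) (List.ofFn y)
  simp only [List.map_ofFn, List.length_ofFn, Function.comp_def] at h
  exact h

section OrderedProd

variable {α : Type*} [LinearOrder α]

variable (R) in
noncomputable def orderedProd (y : α → M) (A : Finset α) : ExteriorAlgebra R M :=
  (A.sort.map (ι R ∘ y)).prod

def inversions (A B : Finset α) : ℕ := ∑ b ∈ B, #{a ∈ A | b < a}

theorem orderedProd_insert_of_lt (y : α → M) {A : Finset α} {b : α} (hb : ∀ a ∈ A, b < a) :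
    orderedProd R y (insert b A) = ι R (y b) * orderedProd R y A := by
  rw [orderedProd, sort_insert _ (fun a ha => (hb a ha).le) fun h => (hb b h).false]
  rfl

theorem orderedProd_mul_ι (y : α → M) (A : Finset α) (b : α) :
    orderedProd R y A * ι R (y b) = (-1 : ℤ) ^ #A • (ι R (y b) * orderedProd R y A) := by
  rw [orderedProd, ← List.map_map, ι_mul_prod_map_ι, smul_smul, List.length_map, length_sort,
    ← pow_add, ← two_mul, pow_mul, neg_one_sq, one_pow, one_smul]

theorem ι_mul_orderedProd (y : α → M) {A : Finset α} {b : α} (hb : b ∉ A) :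
    ι R (y b) * orderedProd R y A
      = (-1 : ℤ) ^ #{a ∈ A | a < b} • orderedProd R y (insert b A) := by
  induction A using Finset.induction_on_min with
  | empty => simp [orderedProd]
  | insert c A hc ih =>
    obtain ⟨hbc, hbA⟩ : b ≠ c ∧ b ∉ A := by simpa using hb
    rcases hbc.lt_or_gt with hlt | hgt
    · have hb' : ∀ a ∈ insert c A, b < a := by
        simpa using ⟨hlt, fun a ha => hlt.trans (hc a ha)⟩
      rw [orderedProd_insert_of_lt y hb', filter_eq_empty_iff.2 fun a ha => (hb' a ha).not_gt]
      simp
    · have hc' : ∀ a ∈ insert b A, c < a := by simpa using ⟨hgt, hc⟩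
      have hcA : c ∉ A := fun h => (hc c h).false
      rw [orderedProd_insert_of_lt y hc, ← mul_assoc, ← neg_eq_of_add_eq_zero_left
        (ι_add_mul_swap _ _), neg_mul, mul_assoc, ih hbA, mul_smul_comm,
        ← orderedProd_insert_of_lt y hc', insert_comm, filter_insert, if_pos hgt,
        card_insert_of_notMem (by simp [hcA]), pow_succ]
      module

theorem orderedProd_mul_orderedProd (y : α → M) {A B : Finset α} (hAB : Disjoint A B) :
    orderedProd R y A * orderedProd R y B
      = (-1 : ℤ) ^ inversions A B • orderedProd R y (A ∪ B) := by
  induction B using Finset.induction_on_min generalizing A with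
  | empty => simp [orderedProd, inversions]
  | insert b B hb ih =>
    obtain ⟨hbA, hAB⟩ : b ∉ A ∧ Disjoint A B := by simpa using hAB
    have hbB : b ∉ B := fun h => (hb b h).false
    rw [orderedProd_insert_of_lt y hb, ← mul_assoc, orderedProd_mul_ι, smul_mul_assoc, mul_assoc,
      ih hAB, mul_smul_comm, ι_mul_orderedProd y (by simp [hbA, hbB]), smul_smul, smul_smul,
      ← union_insert, filter_union, filter_false_of_mem (fun a ha => (hb a ha).not_gt),
      union_empty]
    congr 1
    have hsplit : #{a ∈ A | a < b} + #{a ∈ A | b < a} = #A := by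
      rw [← card_union_of_disjoint (disjoint_filter.2 fun a _ h => h.not_gt)]
      congr 1
      ext a
      simp only [mem_union, mem_filter]
      constructor
      · rintro (h | h) <;> exact h.1
      · exact fun ha => (ne_of_mem_of_not_mem ha hbA).lt_or_gt.imp (⟨ha, ·⟩) (⟨ha, ·⟩)
    simp only [← pow_add, inversions, sum_insert hbB]
    rw [neg_one_pow_eq_pow_mod_two, neg_one_pow_eq_pow_mod_two (_ + _)]
    congr 1
    omega

theorem orderedProd_map {β : Type*} [LinearOrder β] (f : β ↪o α) (y : α → M) (A : Finset β) :
    orderedProd R y (A.map f.toEmbedding) = orderedProd R (y ∘ f) A := by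
  rw [orderedProd, orderedProd, ← (f.strictMono.strictMonoOn A).map_finsetSort, List.map_map]
  rfl

theorem ιMulti_eq_orderedProd_univ {n : ℕ} (y : Fin n → M) :
    ιMulti R n y = orderedProd R y univ := by
  rw [ιMulti_apply, orderedProd, Fin.sort_univ, List.ofFn_eq_map]
  rfl

theorem ιMulti_comp_orderEmbOfFin (y : α → M) (S : Finset α) {k : ℕ} (h : #S = k) :
    ιMulti R k (y ∘ S.orderEmbOfFin h) = orderedProd R y S := by
  rw [ιMulti_eq_orderedProd_univ, ← orderedProd_map, map_orderEmbOfFin_univ]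

end OrderedProd

end ExteriorAlgebra

theorem shuffleSign_eq_neg_one_pow_inversions {n : ℕ} (T : Finset (Fin n)) :
    shuffleSign T = (-1) ^ inversions Tᶜ T :=
  rfl

theorem shuffleSign_mul_self {n : ℕ} (S : Finset (Fin n)) : shuffleSign S * shuffleSign S = 1 := by
  rw [shuffleSign, ← mul_pow]
  simp

theorem ιMulti_subword_compl_mul_ιMulti_subword {R M : Type*} [CommRing R] [AddCommGroup M]
    [Module R M] {n : ℕ} (y : Fin n → M) (T : Finset (Fin n)) :
    ιMulti R _ (subword y Tᶜ) * ιMulti R _ (subword y T) = shuffleSign T • ιMulti R n y := by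
  rw [ιMulti_eq_orderedProd_univ y, shuffleSign_eq_neg_one_pow_inversions, ← union_compl T,
    union_comm, ← orderedProd_mul_orderedProd y disjoint_compl_left,
    ← ιMulti_comp_orderEmbOfFin y T rfl, ← ιMulti_comp_orderEmbOfFin y Tᶜ rfl]
  rfl

section Reindexing

variable {β : Type*} [AddCommMonoid β]

theorem sum_finset_fin_add {a b : ℕ} (f : Finset (Fin (a + b)) → β) :
    ∑ B, f B = ∑ S : Finset (Fin a), ∑ W : Finset (Fin b),
      f ((S.disjSum W).map finSumFinEquiv.toEmbedding) := by
  rw [← Fintype.sum_prod_type']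
  exact (Fintype.sum_equiv (sumEquiv.toEquiv.symm.trans (Equiv.finsetCongr finSumFinEquiv)) _ _
    fun _ => rfl).symm

theorem sum_image_orderEmbOfFin {α : Type*} [LinearOrder α] (A : Finset α) (g : Finset α → β) :
    ∑ W : Finset (Fin #A), g (W.image (A.orderEmbOfFin rfl)) = ∑ W ∈ A.powerset, g W := by
  conv_rhs => rw [← image_orderEmbOfFin_univ A rfl]
  rw [powerset_image, sum_image fun _ _ _ _ h => image_injective (A.orderEmbOfFin rfl).injective h,
    powerset_univ]

theorem sum_sum_powerset_compl_union {α : Type*} [Fintype α] [DecidableEq α]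
    (f : Finset α → Finset α → β) :
    ∑ T, ∑ W ∈ Tᶜ.powerset, f T (T ∪ W) = ∑ A, ∑ T ∈ A.powerset, f T A := by
  have hunion (T : Finset α) :
      ∑ W ∈ Tᶜ.powerset, f T (T ∪ W) = ∑ A ∈ {A | T ⊆ A}, f T A := by
    refine sum_nbij' (T ∪ ·) (· \ T) (fun W _ => by simp) (fun A _ => by simp)
      (fun W hW => union_sdiff_cancel_left ?_) (fun A hA => union_sdiff_of_subset ?_)
      fun _ _ => rfl
    · simpa [subset_compl_iff_disjoint_left, disjoint_comm] using hW
    · simpa using hA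
  simp_rw [hunion]
  exact sum_comm' fun T A => by simp

end Reindexing

section Monomials

variable {L : Type*} {m : ℕ} {c d : Fin m} {ℓ ℓu ℓv : ℕ}

noncomputable def lpMonomial (w : Fin ℓ → L) (φ : Fin ℓ → Fin m) :
    LetterplaceAlgebra L m :=
  ιMulti ℤ ℓ fun t => Finsupp.single (w t, φ t) 1

theorem lpMonomial_append {a b : ℕ} (w : Fin a → L) (w' : Fin b → L) (φ : Fin a → Fin m)
    (φ' : Fin b → Fin m) :
    lpMonomial (Fin.append w w') (Fin.append φ φ') = lpMonomial w φ * lpMonomial w' φ' := by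
  rw [lpMonomial, lpMonomial, lpMonomial, ιMulti_mul_ιMulti]
  congr 1
  funext t
  refine Fin.addCases (fun t => ?_) (fun t => ?_) t <;> simp

theorem lpMonomial_mul_comm {a b : ℕ} (w : Fin a → L) (w' : Fin b → L) (φ : Fin a → Fin m)
    (φ' : Fin b → Fin m) :
    lpMonomial w φ * lpMonomial w' φ'
      = (-1 : ℤ) ^ (a * b) • (lpMonomial w' φ' * lpMonomial w φ) :=
  ιMulti_mul_ιMulti_comm _ _

theorem lpMonomial_subword_compl_mul_subword (w : Fin ℓ → L) (φ : Fin ℓ → Fin m)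
    (T : Finset (Fin ℓ)) :
    lpMonomial (subword w Tᶜ) (subword φ Tᶜ) * lpMonomial (subword w T) (subword φ T)
      = shuffleSign T • lpMonomial w φ :=
  ιMulti_subword_compl_mul_ιMulti_subword (fun t => Finsupp.single (w t, φ t) 1) T

def twoPlaces (c d : Fin m) (B : Finset (Fin ℓ)) (t : Fin ℓ) : Fin m :=
  if t ∈ B then d else c

theorem twoPlaces_empty : twoPlaces c d (∅ : Finset (Fin ℓ)) = fun _ => c := by
  funext t
  simp [twoPlaces]

theorem twoPlaces_injective (hcd : c ≠ d) : Function.Injective (twoPlaces c d (ℓ := ℓ)) := by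
  intro B B' h
  ext t
  have := congrFun h t
  by_cases hB : t ∈ B <;> by_cases hB' : t ∈ B' <;> simp_all [twoPlaces, hcd.symm]

theorem card_filter_twoPlaces (hcd : c ≠ d) (B : Finset (Fin ℓ)) (e : Fin m) :
    #{t | twoPlaces c d B t = e} = (Pi.single c #Bᶜ + Pi.single d #B : Fin m → ℕ) e := by
  by_cases hd : e = d
  · subst hd
    have hB : ({t | twoPlaces c e B t = e} : Finset (Fin ℓ)) = B := by
      ext t; by_cases ht : t ∈ B <;> simp [twoPlaces, ht, hcd]
    simp [hB, Ne.symm hcd]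
  by_cases hc : e = c
  · subst hc
    have hB : ({t | twoPlaces e d B t = e} : Finset (Fin ℓ)) = Bᶜ := by
      ext t; by_cases ht : t ∈ B <;> simp [twoPlaces, ht, Ne.symm hd]
    simp [hB, hd]
  · have hB : ({t | twoPlaces c d B t = e} : Finset (Fin ℓ)) = ∅ := filter_eq_empty_iff.2
      fun t _ => by by_cases ht : t ∈ B <;> simp [twoPlaces, ht, Ne.symm hd, Ne.symm hc]
    simp [hB, hc, hd]

theorem twoPlaces_map_disjSum {a b : ℕ} (S : Finset (Fin a)) (W : Finset (Fin b)) :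
    twoPlaces c d ((S.disjSum W).map finSumFinEquiv.toEmbedding)
      = Fin.append (twoPlaces c d S) (twoPlaces c d W) := by
  funext t
  refine Fin.addCases (fun t => ?_) (fun t => ?_) t <;> simp [twoPlaces, mem_map_equiv]

theorem shuffleSign_smul_lpMonomial_append_mul_subword (u : Fin ℓu → L) (v : Fin ℓv → L)
    (S : Finset (Fin ℓv)) :
    shuffleSign S • (lpMonomial (Fin.append u (subword v Sᶜ)) (fun _ => c)
        * lpMonomial (subword v S) (fun _ => d))
      = (-1 : ℤ) ^ (ℓu * ℓv) • (lpMonomial v (twoPlaces c d S) * lpMonomial u (fun _ => c)) := by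
  have hv : lpMonomial (subword v Sᶜ) (fun _ => c) * lpMonomial (subword v S) (fun _ => d)
      = shuffleSign S • lpMonomial v (twoPlaces c d S) := by
    convert lpMonomial_subword_compl_mul_subword v (twoPlaces c d S) S using 3 <;> funext s
    · exact (if_neg (mem_compl.1 (Sᶜ.orderIsoOfFin rfl s).2)).symm
    · simp [subword, twoPlaces]
  rw [← Fin.append_castAdd_natAdd (f := fun _ : Fin (ℓu + #Sᶜ) => c), lpMonomial_append,
    mul_assoc, hv, mul_smul_comm, smul_smul, shuffleSign_mul_self, one_smul, lpMonomial_mul_comm]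

theorem smul_lpMonomial_append_subword_mul_subword (u : Fin ℓu → L) (v : Fin ℓv → L)
    (T : Finset (Fin ℓu)) (S : Finset (Fin ℓv)) (W : Finset (Fin #Tᶜ)) :
    ((-1 : ℤ) ^ #T * shuffleSign T) •
        (lpMonomial (Fin.append v (subword u Tᶜ)) (Fin.append (twoPlaces c d S) (twoPlaces c d W))
          * lpMonomial (subword u T) (fun _ => d))
      = (-1 : ℤ) ^ #T • (lpMonomial v (twoPlaces c d S)
          * lpMonomial u (twoPlaces c d (T ∪ W.image (Tᶜ.orderEmbOfFin rfl)))) := by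
  have hu : lpMonomial (subword u Tᶜ) (twoPlaces c d W) * lpMonomial (subword u T) (fun _ => d)
      = shuffleSign T • lpMonomial u (twoPlaces c d (T ∪ W.image (Tᶜ.orderEmbOfFin rfl))) := by
    convert lpMonomial_subword_compl_mul_subword u _ T using 3 <;> funext s
    · have hT : Tᶜ.orderEmbOfFin rfl s ∉ T := mem_compl.1 (Tᶜ.orderEmbOfFin_mem rfl s)
      simp [subword, twoPlaces, hT, (Tᶜ.orderEmbOfFin rfl).injective.mem_finset_image]
    · simp [subword, twoPlaces]
  rw [lpMonomial_append, mul_assoc, hu, mul_smul_comm, smul_smul, mul_assoc,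
    shuffleSign_mul_self, mul_one]

end Monomials

section Biproducts

variable {L : Type*} [DecidableEq L] {m ℓ ℓu ℓv : ℕ} {i j : Fin m}

theorem card_filter_eq_apply_ne_zero (f : Fin ℓ → Fin m) (t : Fin ℓ) : #{s | f s = f t} ≠ 0 :=
  card_ne_zero_of_mem (mem_filter.2 ⟨mem_univ t, rfl⟩)

theorem biproduct_single (w : Fin ℓ → L) (c : Fin m) (p : ℕ) :
    biproduct w (Pi.single c p) = if ℓ = p then lpMonomial w (fun _ => c) else 0 := by
  rw [biproduct, sum_filter, Fintype.sum_eq_single (fun _ => c)]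
  · refine if_congr ⟨fun h => by simpa using h c, ?_⟩ rfl rfl
    rintro rfl e
    by_cases he : e = c
    · subst he; simp
    · simp [he, Ne.symm he]
  · intro f hf
    refine if_neg fun h => ?_
    obtain ⟨t, ht⟩ : ∃ t, f t ≠ c := by
      by_contra! h'
      exact hf (funext h')
    exact card_filter_eq_apply_ne_zero f t (by rw [h (f t), Pi.single_eq_of_ne ht])

theorem biproduct_single_add_single (w : Fin ℓ → L) {c d : Fin m} (hcd : c ≠ d) (p r : ℕ) :
    biproduct w (Pi.single c p + Pi.single d r)
      = ∑ B : Finset (Fin ℓ), if ℓ = p + r ∧ #B = r then lpMonomial w (twoPlaces c d B) else 0 := by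
  rw [biproduct, sum_filter]
  symm
  refine Fintype.sum_of_injective (twoPlaces c d) (twoPlaces_injective hcd) _ _ ?_ fun B => ?_
  · intro f hf
    refine if_neg fun h => hf ⟨({t | f t = d} : Finset (Fin ℓ)), funext fun t => ?_⟩
    have hft : f t = c ∨ f t = d := by
      by_contra! hft
      exact card_filter_eq_apply_ne_zero f t (by simp [h (f t), hft.1, hft.2])
    by_cases htd : f t = d
    · simp [twoPlaces, htd]
    · simp [twoPlaces, hft.resolve_right htd, hcd]
  · refine if_congr ?_ rfl rfl
    simp only [card_filter_twoPlaces hcd, card_compl, Fintype.card_fin]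
    have hB : #B ≤ ℓ := by simpa using card_le_univ B
    constructor
    · rintro ⟨h₁, h₂⟩ e
      rw [h₂, show ℓ - r = p by omega]
    · intro h
      have hc := h c
      have hd := h d
      simp [hcd, Ne.symm hcd] at hc hd
      omega

theorem sum_range_biproduct_mul_biproduct (hij : i ≠ j) {k : ℕ} (w : Fin ℓ → L) (x : Fin k → L)
    (p q : ℕ) :
    ∑ r ∈ range (q + 1),
        biproduct w (Pi.single i p + Pi.single j r) * biproduct x (Pi.single j (q - r))
      = ∑ B : Finset (Fin ℓ), if ℓ + k = p + q ∧ #B + k = q then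
          lpMonomial w (twoPlaces i j B) * lpMonomial x (fun _ => j) else 0 := by
  simp only [biproduct_single_add_single w hij, biproduct_single, sum_mul]
  rw [sum_comm]
  refine sum_congr rfl fun B _ => ?_
  by_cases hB : #B ≤ q
  · rw [sum_eq_single_of_mem #B (mem_range.2 (by omega)) fun r _ hr => by
      rw [if_neg (by omega), zero_mul]]
    split_ifs <;> first | rfl | (exfalso; omega) | simp
  · rw [if_neg (by omega)]
    exact sum_eq_zero fun r hr => by rw [if_neg (by simp at hr; omega), zero_mul]

theorem sum_shuffleSign_smul_biproduct_mul_biproduct (u : Fin ℓu → L) (v : Fin ℓv → L)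
    (p q : ℕ) :
    ∑ S : Finset (Fin ℓv), shuffleSign S •
        (biproduct (Fin.append u (subword v Sᶜ)) (Pi.single i p)
          * biproduct (subword v S) (Pi.single j q))
      = (-1 : ℤ) ^ (ℓu * ℓv) • ∑ S : Finset (Fin ℓv), if ℓv + ℓu = p + q ∧ #S = q then
          lpMonomial v (twoPlaces i j S) * lpMonomial u (fun _ => i) else 0 := by
  rw [smul_sum]
  refine sum_congr rfl fun S _ => ?_
  have hS : #Sᶜ + #S = ℓv := by rw [card_compl_add_card, Fintype.card_fin]
  simp only [biproduct_single, ite_mul, zero_mul, mul_ite, mul_zero, smul_ite, smul_zero]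
  split_ifs <;>
    first
    | rfl
    | (exfalso; omega)
    | exact shuffleSign_smul_lpMonomial_append_mul_subword u v S

theorem sum_range_smul_biproduct_mul_biproduct (hij : i ≠ j) (u : Fin ℓu → L) (v : Fin ℓv → L)
    (p q : ℕ) (T : Finset (Fin ℓu)) :
    ∑ r ∈ range (q + 1), ((-1 : ℤ) ^ #T * shuffleSign T) •
        (biproduct (Fin.append v (subword u Tᶜ)) (Pi.single i p + Pi.single j r)
          * biproduct (subword u T) (Pi.single j (q - r)))
      = ∑ S : Finset (Fin ℓv), ∑ W ∈ Tᶜ.powerset, (-1 : ℤ) ^ #T •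
          if ℓv + ℓu = p + q ∧ #S + #(T ∪ W) = q then
            lpMonomial v (twoPlaces i j S) * lpMonomial u (twoPlaces i j (T ∪ W)) else 0 := by
  have hT : ℓv + #Tᶜ + #T = ℓv + ℓu := by rw [add_assoc, card_compl_add_card, Fintype.card_fin]
  rw [← smul_sum, sum_range_biproduct_mul_biproduct hij, hT, smul_sum, sum_finset_fin_add]
  refine sum_congr rfl fun S _ => ?_
  rw [← sum_image_orderEmbOfFin]
  refine sum_congr rfl fun W _ => ?_
  have hW : #(T ∪ W.image (Tᶜ.orderEmbOfFin rfl)) = #T + #W := by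
    rw [card_union_of_disjoint, card_image_of_injective _ (Tᶜ.orderEmbOfFin rfl).injective]
    exact disjoint_left.2 fun t ht ht' => by
      obtain ⟨s, -, rfl⟩ := mem_image.1 ht'
      exact mem_compl.1 (Tᶜ.orderEmbOfFin_mem rfl s) ht
  rw [card_map, card_disjSum, twoPlaces_map_disjSum, smul_ite, smul_ite, smul_zero, smul_zero,
    smul_lpMonomial_append_subword_mul_subword, hW, add_assoc, add_comm #W]

theorem sum_sum_range_smul_biproduct_mul_biproduct (hij : i ≠ j) (u : Fin ℓu → L)
    (v : Fin ℓv → L) (p q : ℕ) :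
    ∑ T : Finset (Fin ℓu), ∑ r ∈ range (q + 1), ((-1 : ℤ) ^ #T * shuffleSign T) •
        (biproduct (Fin.append v (subword u Tᶜ)) (Pi.single i p + Pi.single j r)
          * biproduct (subword u T) (Pi.single j (q - r)))
      = ∑ S : Finset (Fin ℓv), if ℓv + ℓu = p + q ∧ #S = q then
          lpMonomial v (twoPlaces i j S) * lpMonomial u (fun _ => i) else 0 := by
  simp_rw [sum_range_smul_biproduct_mul_biproduct hij]
  rw [sum_comm]
  refine sum_congr rfl fun S _ => ?_
  refine (sum_sum_powerset_compl_union fun T A => (-1 : ℤ) ^ #T •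
    if ℓv + ℓu = p + q ∧ #S + #A = q then
      lpMonomial v (twoPlaces i j S) * lpMonomial u (twoPlaces i j A) else 0).trans ?_
  simp_rw [← sum_smul, sum_powerset_neg_one_pow_card, ite_smul, one_smul, zero_smul]
  simp [twoPlaces_empty]

end Biproducts

/-- a consequence of the straightening law: in `Skew[L|m]`, for words
`u, v`, places `i ≠ j` and `p, q ∈ ℕ`:
`Σ_{(v)} (uv₍₁₎|i^{(p)})(v₍₂₎|j^{(q)}) =
  (-1)^{|u||v|} Σ_{(u),r} (-1)^{|u₍₂₎|} (vu₍₁₎|i^{(p)}j^{(r)})(u₍₂₎|j^{(q-r)})`,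
the slices ranging over all coproduct slices and `0 ≤ r ≤ q` (biproducts of the wrong
length being zero). -/
theorem stmt16 {L : Type*} [DecidableEq L] {m : ℕ} (i j : Fin m) (hij : i ≠ j)
    {ℓu ℓv : ℕ} (u : Fin ℓu → L) (v : Fin ℓv → L) (p q : ℕ) :
    (∑ S ∈ (Finset.univ : Finset (Fin ℓv)).powerset,
      shuffleSign S •
        (biproduct (Fin.append u (subword v Sᶜ)) (Pi.single i p) *
          biproduct (subword v S) (Pi.single j q))) =
    ((-1 : ℤ) ^ (ℓu * ℓv)) •
      ∑ T ∈ (Finset.univ : Finset (Fin ℓu)).powerset, ∑ r ∈ Finset.range (q + 1),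
        (((-1 : ℤ) ^ T.card) * shuffleSign T) •
          (biproduct (Fin.append v (subword u Tᶜ)) (Pi.single i p + Pi.single j r) *
            biproduct (subword u T) (Pi.single j (q - r))) := by
  rw [powerset_univ, powerset_univ, sum_shuffleSign_smul_biproduct_mul_biproduct,
    sum_sum_range_smul_biproduct_mul_biproduct hij]
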